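/- Lemma (comparison with the frozen-dual auxiliary sequence). Let ℓ, D_Y, r_y > 0, consider the hard OS instance, and run Perturbed Smoothed GDA on it with parameters r_x > ℓ, β ∈ (0,1), α > 0 and 0 < c < 1/(r_x + ℓ), initialized at (x_0, y_0, z_0) with 0 < x_0 < 1, 0 < z_0 < 1 and y_0 = D_Y. Define the auxiliary sequence by (x_0', y_0', z_0') := (x_0, y_0, z_0) and, for all t ≥ 0, x_{t+1}' := (1 − c·r_x − ℓ·c·D_Y/(D_Y+1))·x_t' + c·r_x·z_t', y_{t+1}' := D_Y, z_{t+1}' := β·(1 − ℓ·c·D_Y/(D_Y+1) − c·r_x)·x_t' + (1 − β + β·c·r_x)·z_t'. Then for every t ∈ ℕ: (i) 0 < x_t' ≤ x_t ≤ 1; (ii) 0 ≤ y_t ≤ y_t' = D_Y; (iii) 0 < z_t' ≤ z_t ≤ 1. -/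

import Mathlib

/-!
While `0 < x ≤ 1`, the hard instance is quadratic, so a primal step is the affine map
`x ↦ (1 - c r_x - ℓ c y / (D_Y + 1)) x + c r_x z`, and the `z`-step is the convex combination
`(1 - β) z + β x₊`. Both maps have nonnegative weights summing to at most one and are monotone
in `(x, z)`; the weight on `x` is decreasing in `y ∈ [0, D_Y]` and still positive at `y = D_Y`
because `c (r_x + ℓ) < 1`. Hence the frozen-dual sequence, which always uses `y = D_Y`, stays a
positive lower bound and the iterates stay in `(0, 1]`, by induction on `t`.
-/
noncomputable section

/-- The function `h` of the hard OS instance. -/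
def hOS (l Dy : ℝ) (x : ℝ) : ℝ :=
  if |x| ≤ 1 then l / (2 * (Dy + 1)) * x ^ 2
  else if |x| < 2 then l / (Dy + 1) - l / (2 * (Dy + 1)) * (|x| - 2) ^ 2
  else l / (Dy + 1)

/-- The derivative of `hOS` in `x`. -/
def hOS' (l Dy : ℝ) (x : ℝ) : ℝ :=
  if |x| ≤ 1 then l / (Dy + 1) * x
  else if |x| < 2 then -(l / (Dy + 1)) * (|x| - 2) * Real.sign x
  else 0

/-- Metric projection of `v` onto the interval `[0, Dy]`. -/
def projI (Dy v : ℝ) : ℝ := max 0 (min Dy v)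

/-- Value function `Φ(z) = max_{y ∈ [0, Dy]} h(z)·y` of the hard OS instance. -/
def PhiOS (l Dy : ℝ) (z : ℝ) : ℝ :=
  sSup ((fun y => hOS l Dy z * y) '' Set.Icc (0 : ℝ) Dy)

/-- `x` is an `ε`-optimization-stationary point of the hard OS instance:
the minimizer `p` of `Φ(z) + ℓ(z − x)²` over `z ∈ ℝ` satisfies `|p − x| ≤ ε/(2ℓ)`. -/
def IsOS1 (l Dy ε x : ℝ) : Prop :=
  ∃ p : ℝ, (∀ z : ℝ, PhiOS l Dy p + l * (p - x) ^ 2 ≤ PhiOS l Dy z + l * (z - x) ^ 2) ∧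
    |p - x| ≤ ε / (2 * l)

theorem hOS'_of_abs_le_one {l Dy x : ℝ} (hx : |x| ≤ 1) : hOS' l Dy x = l / (Dy + 1) * x := by
  rw [hOS', if_pos hx]

theorem projI_mem_Icc {Dy : ℝ} (hDy : 0 ≤ Dy) (v : ℝ) : projI Dy v ∈ Set.Icc 0 Dy :=
  ⟨le_max_left _ _, max_le hDy (min_le_left _ _)⟩

theorem weightedSum_sandwich {p p' q u u' v v' : ℝ} (hp' : 0 < p') (hpp' : p' ≤ p) (hq : 0 ≤ q)
    (hpq : p + q ≤ 1) (hu : 0 < u' ∧ u' ≤ u ∧ u ≤ 1) (hv : 0 < v' ∧ v' ≤ v ∧ v ≤ 1) :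
    0 < p' * u' + q * v' ∧ p' * u' + q * v' ≤ p * u + q * v ∧ p * u + q * v ≤ 1 := by
  obtain ⟨hu', hu'u, hu1⟩ := hu
  obtain ⟨hv', hv'v, hv1⟩ := hv
  have hp : 0 ≤ p := hp'.le.trans hpp'
  refine ⟨by positivity, ?_, ?_⟩
  · gcongr
  · nlinarith [mul_le_mul_of_nonneg_left hu1 hp, mul_le_mul_of_nonneg_left hv1 hq]

section GradStep

variable {l Dy rx c y x x' z z' : ℝ}

theorem gradStep_eq_comb (hx : |x| ≤ 1) :
    x - c * (hOS' l Dy x * y + rx * (x - z)) =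
      (1 - c * rx - l * c * y / (Dy + 1)) * x + c * rx * z := by
  rw [hOS'_of_abs_le_one hx]
  ring

theorem gradStep_comparison (hl : 0 ≤ l) (hDy : 0 ≤ Dy) (hrx : 0 ≤ rx) (hc : 0 ≤ c)
    (hc1 : c * (rx + l) < 1) (hy : y ∈ Set.Icc 0 Dy)
    (hx : 0 < x' ∧ x' ≤ x ∧ x ≤ 1) (hz : 0 < z' ∧ z' ≤ z ∧ z ≤ 1) :
    0 < (1 - c * rx - l * c * Dy / (Dy + 1)) * x' + c * rx * z' ∧
      (1 - c * rx - l * c * Dy / (Dy + 1)) * x' + c * rx * z' ≤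
        x - c * (hOS' l Dy x * y + rx * (x - z)) ∧
      x - c * (hOS' l Dy x * y + rx * (x - z)) ≤ 1 := by
  have hDy1 : 0 < Dy + 1 := by linarith
  rw [gradStep_eq_comb (abs_le.mpr ⟨by linarith [hx.1, hx.2.1], hx.2.2⟩)]
  have hfrozen : l * c * Dy / (Dy + 1) ≤ l * c := by
    rw [div_le_iff₀ hDy1]
    nlinarith [mul_nonneg hl hc]
  have hy' : l * c * y / (Dy + 1) ≤ l * c * Dy / (Dy + 1) := by
    gcongr
    exact hy.2
  have hy0 : 0 ≤ l * c * y / (Dy + 1) := div_nonneg (mul_nonneg (mul_nonneg hl hc) hy.1) hDy1.le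
  exact weightedSum_sandwich (by linarith) (by linarith) (by positivity) (by linarith) hx hz

end GradStep

theorem psgda_frozen_dual_comparison_general
    (l Dy ry rx α β c : ℝ) (xs ys zs xs' ys' zs' : ℕ → ℝ)
    (hl : 0 < l) (hDy : 0 < Dy)
    (hrx : l < rx) (hβ : 0 < β) (hβ1 : β < 1)
    (hc : 0 < c) (hc1 : c < 1 / (rx + l))
    -- initialization
    (hx0 : 0 < xs 0 ∧ xs 0 < 1) (hz0 : 0 < zs 0 ∧ zs 0 < 1) (hy0 : ys 0 = Dy)
    -- Perturbed Smoothed GDA iterations on F̃(x,y,z) = h(x)·y + (r_x/2)(x−z)² − (r_y/2)y²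
    (hxrec : ∀ t, xs (t + 1) = xs t - c * (hOS' l Dy (xs t) * ys t + rx * (xs t - zs t)))
    (hyrec : ∀ t, ys (t + 1) = projI Dy (ys t + α * (hOS l Dy (xs (t + 1)) - ry * ys t)))
    (hzrec : ∀ t, zs (t + 1) = zs t + β * (xs (t + 1) - zs t))
    -- the frozen-dual auxiliary sequence
    (hx0' : xs' 0 = xs 0) (hy0' : ys' 0 = ys 0) (hz0' : zs' 0 = zs 0)
    (hxrec' : ∀ t, xs' (t + 1) =
      (1 - c * rx - l * c * Dy / (Dy + 1)) * xs' t + c * rx * zs' t)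
    (hyrec' : ∀ t, ys' (t + 1) = Dy)
    (hzrec' : ∀ t, zs' (t + 1) =
      β * (1 - l * c * Dy / (Dy + 1) - c * rx) * xs' t + (1 - β + β * c * rx) * zs' t) :
    ∀ t : ℕ,
      (0 < xs' t ∧ xs' t ≤ xs t ∧ xs t ≤ 1) ∧
      (0 ≤ ys t ∧ ys t ≤ ys' t ∧ ys' t = Dy) ∧
      (0 < zs' t ∧ zs' t ≤ zs t ∧ zs t ≤ 1) := by
  have hcl : c * (rx + l) < 1 := (lt_div_iff₀ (by linarith)).mp hc1
  have hys : ∀ t, ys t ∈ Set.Icc 0 Dy := by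
    rintro (_ | t)
    · rw [hy0]
      exact ⟨hDy.le, le_rfl⟩
    · exact hyrec t ▸ projI_mem_Icc hDy.le _
  have hys' : ∀ t, ys' t = Dy := by
    rintro (_ | t)
    · rw [hy0', hy0]
    · exact hyrec' t
  have hxz : ∀ t, (0 < xs' t ∧ xs' t ≤ xs t ∧ xs t ≤ 1) ∧ (0 < zs' t ∧ zs' t ≤ zs t ∧ zs t ≤ 1) := by
    intro t
    induction t with
    | zero =>
      rw [hx0', hz0']
      exact ⟨⟨hx0.1, le_rfl, hx0.2.le⟩, ⟨hz0.1, le_rfl, hz0.2.le⟩⟩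
    | succ t ih =>
      have hx : 0 < xs' (t + 1) ∧ xs' (t + 1) ≤ xs (t + 1) ∧ xs (t + 1) ≤ 1 := by
        rw [hxrec', hxrec]
        exact gradStep_comparison hl.le hDy.le (by linarith) hc.le hcl (hys t) ih.1 ih.2
      have hz : zs (t + 1) = (1 - β) * zs t + β * xs (t + 1) := by rw [hzrec]; ring
      have hz' : zs' (t + 1) = (1 - β) * zs' t + β * xs' (t + 1) := by
        rw [hzrec', hxrec']; ring
      rw [hz, hz']
      exact ⟨hx, weightedSum_sandwich (by linarith) le_rfl hβ.le (by linarith) ih.2 hx⟩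
  intro t
  exact ⟨(hxz t).1, ⟨(hys t).1, hys' t ▸ (hys t).2, hys' t⟩, (hxz t).2⟩

/-- Comparison of Perturbed Smoothed GDA on the hard OS instance with the
frozen-dual auxiliary sequence. -/
theorem psgda_frozen_dual_comparison
    (l Dy ry rx α β c : ℝ) (xs ys zs xs' ys' zs' : ℕ → ℝ)
    (hl : 0 < l) (hDy : 0 < Dy) (hry : 0 < ry)
    (hrx : l < rx) (hβ : 0 < β) (hβ1 : β < 1) (hα : 0 < α)
    (hc : 0 < c) (hc1 : c < 1 / (rx + l))
    -- initialization
    (hx0 : 0 < xs 0 ∧ xs 0 < 1) (hz0 : 0 < zs 0 ∧ zs 0 < 1) (hy0 : ys 0 = Dy)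
    -- Perturbed Smoothed GDA iterations on F̃(x,y,z) = h(x)·y + (r_x/2)(x−z)² − (r_y/2)y²
    (hxrec : ∀ t, xs (t + 1) = xs t - c * (hOS' l Dy (xs t) * ys t + rx * (xs t - zs t)))
    (hyrec : ∀ t, ys (t + 1) = projI Dy (ys t + α * (hOS l Dy (xs (t + 1)) - ry * ys t)))
    (hzrec : ∀ t, zs (t + 1) = zs t + β * (xs (t + 1) - zs t))
    -- the frozen-dual auxiliary sequence
    (hx0' : xs' 0 = xs 0) (hy0' : ys' 0 = ys 0) (hz0' : zs' 0 = zs 0)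
    (hxrec' : ∀ t, xs' (t + 1) =
      (1 - c * rx - l * c * Dy / (Dy + 1)) * xs' t + c * rx * zs' t)
    (hyrec' : ∀ t, ys' (t + 1) = Dy)
    (hzrec' : ∀ t, zs' (t + 1) =
      β * (1 - l * c * Dy / (Dy + 1) - c * rx) * xs' t + (1 - β + β * c * rx) * zs' t) :
    ∀ t : ℕ,
      (0 < xs' t ∧ xs' t ≤ xs t ∧ xs t ≤ 1) ∧
      (0 ≤ ys t ∧ ys t ≤ ys' t ∧ ys' t = Dy) ∧
      (0 < zs' t ∧ zs' t ≤ zs t ∧ zs t ≤ 1) :=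
  psgda_frozen_dual_comparison_general l Dy ry rx α β c xs ys zs xs' ys' zs' hl hDy hrx hβ hβ1 hc
    hc1 hx0 hz0 hy0 hxrec hyrec hzrec hx0' hy0' hz0' hxrec' hyrec' hzrec'
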